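/- arXiv:1810.04786 — 3 statements merged into one kernel-verified Lean document; each statement's English description precedes it below -/
import Mathlib

section
/- For all natural numbers n and r with r ≤ n, the Pell numbers satisfy the Catalan identity P_n² − P_{n+r}·P_{n−r} = (−1)^{n−r}·P_r². -/
def pell : ℕ → ℤ
  | 0 => 0
  | 1 => 1
  | (n + 2) => 2 * pell (n + 1) + pell n

lemma pell_add (m k : ℕ) :
    pell (m + k + 1) = pell (m + 1) * pell (k + 1) + pell m * pell k := by
  induction m using Nat.twoStepInduction generalizing k with
  | zero => simp [pell]
  | one =>
      have e : 1 + k + 1 = k + 2 := by omega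
      rw [e]; simp [pell]
  | more m ih1 ih2 =>
      have h1 := ih1 k
      have h2' := ih2 k
      have h2 : pell (m + 1 + k + 1) = pell (m + 2) * pell (k + 1) + pell (m + 1) * pell k := h2'
      have e1 : m + 2 + k + 1 = (m + k + 1) + 2 := by omega
      have e2 : m + 1 + k + 1 = (m + k + 1) + 1 := by omega
      have p3 : pell (m + 2 + 1) = 2 * pell (m + 2) + pell (m + 1) := by
        have e : m + 2 + 1 = (m + 1) + 2 := by omega
        rw [e, pell]
      have p2 : pell (m + 2) = 2 * pell (m + 1) + pell m := by rw [pell]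
      rw [e1, pell, ← e2, p3]
      linear_combination 2 * h2 + h1 - pell k * p2

lemma pell_key (r s : ℕ) :
    pell (s + r) ^ 2 - pell (s + 2 * r) * pell s = (-1) ^ s * pell r ^ 2 := by
  induction s with
  | zero => simp [pell]
  | succ s ih =>
      have h1 := pell_add (s + r) (s + r)
      have h2 := pell_add (s + 2 * r) s
      have e1 : s + r + (s + r) + 1 = s + 2 * r + s + 1 := by omega
      rw [e1] at h1
      have e2 : s + 1 + r = s + r + 1 := by omega
      have e3 : s + 1 + 2 * r = s + 2 * r + 1 := by omega
      have e4 : ((-1 : ℤ)) ^ (s + 1) = -(-1) ^ s := by rw [pow_succ]; ring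
      have q1 : pell (s + r + 1) ^ 2 = pell (s + r + 1) * pell (s + r + 1) := by ring
      have q2 : pell (s + r) ^ 2 = pell (s + r) * pell (s + r) := by ring
      rw [e2, e3, e4, neg_mul, ← ih]
      linarith [h1, h2]

theorem pell_catalan (n r : ℕ) (h : r ≤ n) :
    (pell n) ^ 2 - pell (n + r) * pell (n - r) = (-1) ^ (n - r) * (pell r) ^ 2 := by
  obtain ⟨s, rfl⟩ : ∃ s, n = s + r := ⟨n - r, by omega⟩
  have e : s + r + r = s + 2 * r := by ring
  rw [Nat.add_sub_cancel, e]
  exact pell_key r s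
end

section
/- For all natural numbers n ≥ 1, the dual-complex Pell quaternions satisfy the Cassini identity DCP_{n−1}·DCP_{n+1} − DCP_n² = (−1)^n·2·(1 + i + 6ε + 6iε). -/
/-- The dual-complex Pell quaternion DCP_n = P_n + i P_{n+1} + ε P_{n+2} + iε P_{n+3},
as an element of the dual-complex numbers ℂ[ε] (with i² = -1, ε² = 0). -/
noncomputable def DCP (n : ℕ) : DualNumber ℂ :=
  (pell n : DualNumber ℂ)
    + algebraMap ℂ (DualNumber ℂ) Complex.I * (pell (n + 1) : DualNumber ℂ)
    + DualNumber.eps * (pell (n + 2) : DualNumber ℂ)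
    + algebraMap ℂ (DualNumber ℂ) Complex.I * DualNumber.eps * (pell (n + 3) : DualNumber ℂ)

lemma DCP_rec (n : ℕ) : DCP (n + 2) = 2 * DCP (n + 1) + DCP n := by
  simp only [DCP, show ∀ k, pell (k + 2) = 2 * pell (k + 1) + pell k from fun _ => rfl]
  push_cast
  ring

lemma base : DCP 0 * DCP 2 - (DCP 1) ^ 2 =
      (-1 : DualNumber ℂ) * 2 * (1 + algebraMap ℂ (DualNumber ℂ) Complex.I
        + 6 * DualNumber.eps
        + 6 * (algebraMap ℂ (DualNumber ℂ) Complex.I * DualNumber.eps)) := by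
  have h0 : pell 0 = 0 := rfl
  have h1 : pell 1 = 1 := rfl
  have h2 : pell 2 = 2 := rfl
  have h3 : pell 3 = 5 := rfl
  have h4 : pell 4 = 12 := rfl
  have h5 : pell 5 = 29 := rfl
  simp only [DCP, h0, h1, h2, h3, h4, h5]
  push_cast
  have he : (DualNumber.eps : DualNumber ℂ) ^ 2 = 0 := by
    rw [sq]; exact DualNumber.eps_mul_eps
  have hI : (algebraMap ℂ (DualNumber ℂ) Complex.I) ^ 2 = -1 := by
    rw [sq, ← map_mul, Complex.I_mul_I, map_neg, map_one]
  ring_nf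
  simp only [hI, he]
  ring

theorem DCP_cassini (n : ℕ) (hn : 1 ≤ n) :
    DCP (n - 1) * DCP (n + 1) - (DCP n) ^ 2 =
      (-1) ^ n * 2 * (1 + algebraMap ℂ (DualNumber ℂ) Complex.I
        + 6 * DualNumber.eps
        + 6 * (algebraMap ℂ (DualNumber ℂ) Complex.I * DualNumber.eps)) := by
  induction n, hn using Nat.le_induction with
  | base => simpa using base
  | succ m hm ih =>
    obtain ⟨k, rfl⟩ := Nat.exists_eq_add_of_le hm
    simp only [show 1 + k - 1 = k from by omega, show 1 + k + 1 - 1 = 1 + k from by omega] at ih ⊢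
    have hrec : DCP (1 + k + 1) = 2 * DCP (1 + k) + DCP k := by
      simpa [show k + 2 = 1 + k + 1 from by omega, show k + 1 = 1 + k from by omega]
        using DCP_rec k
    have hrec2 : DCP (1 + k + 1 + 1) = 2 * DCP (1 + k + 1) + DCP (1 + k) := by
      simpa [show 1 + k + 2 = 1 + k + 1 + 1 from by omega] using DCP_rec (1 + k)
    rw [hrec2, hrec]
    rw [hrec] at ih
    rw [pow_succ]
    linear_combination (-1 : DualNumber ℂ) * ih
end

section
/- For all natural numbers n and r with 1 ≤ r ≤ n, the dual-complex Pell quaternions satisfy the Catalan identity DCP_n² − DCP_{n+r}·DCP_{n−r} = (−1)^{n−r}·2·P_r²·(1 + i + 6ε + 6iε). -/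
lemma pell_add_two (n : ℕ) : pell (n + 2) = 2 * pell (n + 1) + pell n := rfl

lemma pell_mul_add : ∀ a b : ℕ, pell a * pell b + pell (a + 1) * pell (b + 1) = pell (a + b + 1) := by
  intro a
  induction a with
  | zero => intro b; simp [pell]
  | succ a ih =>
    intro b
    have h := ih (b + 1)
    rw [show a + (b + 1) + 1 = a + 1 + b + 1 by omega] at h
    rw [← h, pell_add_two a, pell_add_two b]
    ring

lemma pell_vajda (a b cc d : ℕ) (h : a + b = cc + d) (u : ℕ) :
    pell (u + a) * pell (u + b) - pell (u + cc) * pell (u + d)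
      = (-1) ^ u * (pell a * pell b - pell cc * pell d) := by
  induction u with
  | zero => simp
  | succ u ih =>
    have h1 := pell_mul_add (u + a) (u + b)
    have h2 := pell_mul_add (u + cc) (u + d)
    rw [show u + a + (u + b) + 1 = u + cc + (u + d) + 1 by omega] at h1
    rw [show u + 1 + a = u + a + 1 by omega, show u + 1 + b = u + b + 1 by omega,
        show u + 1 + cc = u + cc + 1 by omega, show u + 1 + d = u + d + 1 by omega]
    linear_combination h1 - h2 - ih

lemma DCP_stepA (u r : ℕ) :
    DCP (u + r) ^ 2 - DCP (u + r + r) * DCP u = (-1) ^ u * (DCP r ^ 2 - DCP (r + r) * DCP 0) := by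
  have H00 : pell (u + r) * pell (u + r) - pell (u + r + r) * pell (u)
      = (-1) ^ u * (pell (r) * pell (r) - pell (r + r) * pell (0)) := by
    have h := pell_vajda (r) (r) (r + r) (0) (by omega) u
    rwa [show u + (r + r) = u + r + r by omega, show u + 0 = u by omega] at h
  have H01 : pell (u + r) * pell (u + r + 1) - pell (u + r + r) * pell (u + 1)
      = (-1) ^ u * (pell (r) * pell (r + 1) - pell (r + r) * pell (1)) := by
    have h := pell_vajda (r) (r + 1) (r + r) (1) (by omega) u
    rwa [show u + (r + 1) = u + r + 1 by omega, show u + (r + r) = u + r + r by omega] at h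
  have H02 : pell (u + r) * pell (u + r + 2) - pell (u + r + r) * pell (u + 2)
      = (-1) ^ u * (pell (r) * pell (r + 2) - pell (r + r) * pell (2)) := by
    have h := pell_vajda (r) (r + 2) (r + r) (2) (by omega) u
    rwa [show u + (r + 2) = u + r + 2 by omega, show u + (r + r) = u + r + r by omega] at h
  have H03 : pell (u + r) * pell (u + r + 3) - pell (u + r + r) * pell (u + 3)
      = (-1) ^ u * (pell (r) * pell (r + 3) - pell (r + r) * pell (3)) := by
    have h := pell_vajda (r) (r + 3) (r + r) (3) (by omega) u
    rwa [show u + (r + 3) = u + r + 3 by omega, show u + (r + r) = u + r + r by omega] at h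
  have H10 : pell (u + r + 1) * pell (u + r) - pell (u + r + r + 1) * pell (u)
      = (-1) ^ u * (pell (r + 1) * pell (r) - pell (r + r + 1) * pell (0)) := by
    have h := pell_vajda (r + 1) (r) (r + r + 1) (0) (by omega) u
    rwa [show u + (r + 1) = u + r + 1 by omega, show u + (r + r + 1) = u + r + r + 1 by omega, show u + 0 = u by omega] at h
  have H11 : pell (u + r + 1) * pell (u + r + 1) - pell (u + r + r + 1) * pell (u + 1)
      = (-1) ^ u * (pell (r + 1) * pell (r + 1) - pell (r + r + 1) * pell (1)) := by
    have h := pell_vajda (r + 1) (r + 1) (r + r + 1) (1) (by omega) u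
    rwa [show u + (r + 1) = u + r + 1 by omega, show u + (r + r + 1) = u + r + r + 1 by omega] at h
  have H12 : pell (u + r + 1) * pell (u + r + 2) - pell (u + r + r + 1) * pell (u + 2)
      = (-1) ^ u * (pell (r + 1) * pell (r + 2) - pell (r + r + 1) * pell (2)) := by
    have h := pell_vajda (r + 1) (r + 2) (r + r + 1) (2) (by omega) u
    rwa [show u + (r + 1) = u + r + 1 by omega, show u + (r + 2) = u + r + 2 by omega, show u + (r + r + 1) = u + r + r + 1 by omega] at h
  have H13 : pell (u + r + 1) * pell (u + r + 3) - pell (u + r + r + 1) * pell (u + 3)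
      = (-1) ^ u * (pell (r + 1) * pell (r + 3) - pell (r + r + 1) * pell (3)) := by
    have h := pell_vajda (r + 1) (r + 3) (r + r + 1) (3) (by omega) u
    rwa [show u + (r + 1) = u + r + 1 by omega, show u + (r + 3) = u + r + 3 by omega, show u + (r + r + 1) = u + r + r + 1 by omega] at h
  have H20 : pell (u + r + 2) * pell (u + r) - pell (u + r + r + 2) * pell (u)
      = (-1) ^ u * (pell (r + 2) * pell (r) - pell (r + r + 2) * pell (0)) := by
    have h := pell_vajda (r + 2) (r) (r + r + 2) (0) (by omega) u
    rwa [show u + (r + 2) = u + r + 2 by omega, show u + (r + r + 2) = u + r + r + 2 by omega, show u + 0 = u by omega] at h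
  have H21 : pell (u + r + 2) * pell (u + r + 1) - pell (u + r + r + 2) * pell (u + 1)
      = (-1) ^ u * (pell (r + 2) * pell (r + 1) - pell (r + r + 2) * pell (1)) := by
    have h := pell_vajda (r + 2) (r + 1) (r + r + 2) (1) (by omega) u
    rwa [show u + (r + 2) = u + r + 2 by omega, show u + (r + 1) = u + r + 1 by omega, show u + (r + r + 2) = u + r + r + 2 by omega] at h
  have H22 : pell (u + r + 2) * pell (u + r + 2) - pell (u + r + r + 2) * pell (u + 2)
      = (-1) ^ u * (pell (r + 2) * pell (r + 2) - pell (r + r + 2) * pell (2)) := by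
    have h := pell_vajda (r + 2) (r + 2) (r + r + 2) (2) (by omega) u
    rwa [show u + (r + 2) = u + r + 2 by omega, show u + (r + r + 2) = u + r + r + 2 by omega] at h
  have H23 : pell (u + r + 2) * pell (u + r + 3) - pell (u + r + r + 2) * pell (u + 3)
      = (-1) ^ u * (pell (r + 2) * pell (r + 3) - pell (r + r + 2) * pell (3)) := by
    have h := pell_vajda (r + 2) (r + 3) (r + r + 2) (3) (by omega) u
    rwa [show u + (r + 2) = u + r + 2 by omega, show u + (r + 3) = u + r + 3 by omega, show u + (r + r + 2) = u + r + r + 2 by omega] at h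
  have H30 : pell (u + r + 3) * pell (u + r) - pell (u + r + r + 3) * pell (u)
      = (-1) ^ u * (pell (r + 3) * pell (r) - pell (r + r + 3) * pell (0)) := by
    have h := pell_vajda (r + 3) (r) (r + r + 3) (0) (by omega) u
    rwa [show u + (r + 3) = u + r + 3 by omega, show u + (r + r + 3) = u + r + r + 3 by omega, show u + 0 = u by omega] at h
  have H31 : pell (u + r + 3) * pell (u + r + 1) - pell (u + r + r + 3) * pell (u + 1)
      = (-1) ^ u * (pell (r + 3) * pell (r + 1) - pell (r + r + 3) * pell (1)) := by
    have h := pell_vajda (r + 3) (r + 1) (r + r + 3) (1) (by omega) u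
    rwa [show u + (r + 3) = u + r + 3 by omega, show u + (r + 1) = u + r + 1 by omega, show u + (r + r + 3) = u + r + r + 3 by omega] at h
  have H32 : pell (u + r + 3) * pell (u + r + 2) - pell (u + r + r + 3) * pell (u + 2)
      = (-1) ^ u * (pell (r + 3) * pell (r + 2) - pell (r + r + 3) * pell (2)) := by
    have h := pell_vajda (r + 3) (r + 2) (r + r + 3) (2) (by omega) u
    rwa [show u + (r + 3) = u + r + 3 by omega, show u + (r + 2) = u + r + 2 by omega, show u + (r + r + 3) = u + r + r + 3 by omega] at h
  have H33 : pell (u + r + 3) * pell (u + r + 3) - pell (u + r + r + 3) * pell (u + 3)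
      = (-1) ^ u * (pell (r + 3) * pell (r + 3) - pell (r + r + 3) * pell (3)) := by
    have h := pell_vajda (r + 3) (r + 3) (r + r + 3) (3) (by omega) u
    rwa [show u + (r + 3) = u + r + 3 by omega, show u + (r + r + 3) = u + r + r + 3 by omega] at h
  simp only [DCP, Nat.zero_add]
  linear_combination (norm := (push_cast; ring1)) (1 : DualNumber ℂ) * (1 : DualNumber ℂ) * congrArg (fun t : ℤ => (t : DualNumber ℂ)) H00
    + (1 : DualNumber ℂ) * (algebraMap ℂ (DualNumber ℂ) Complex.I) * congrArg (fun t : ℤ => (t : DualNumber ℂ)) H01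
    + (1 : DualNumber ℂ) * (DualNumber.eps) * congrArg (fun t : ℤ => (t : DualNumber ℂ)) H02
    + (1 : DualNumber ℂ) * (algebraMap ℂ (DualNumber ℂ) Complex.I * DualNumber.eps) * congrArg (fun t : ℤ => (t : DualNumber ℂ)) H03
    + (algebraMap ℂ (DualNumber ℂ) Complex.I) * (1 : DualNumber ℂ) * congrArg (fun t : ℤ => (t : DualNumber ℂ)) H10
    + (algebraMap ℂ (DualNumber ℂ) Complex.I) * (algebraMap ℂ (DualNumber ℂ) Complex.I) * congrArg (fun t : ℤ => (t : DualNumber ℂ)) H11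
    + (algebraMap ℂ (DualNumber ℂ) Complex.I) * (DualNumber.eps) * congrArg (fun t : ℤ => (t : DualNumber ℂ)) H12
    + (algebraMap ℂ (DualNumber ℂ) Complex.I) * (algebraMap ℂ (DualNumber ℂ) Complex.I * DualNumber.eps) * congrArg (fun t : ℤ => (t : DualNumber ℂ)) H13
    + (DualNumber.eps) * (1 : DualNumber ℂ) * congrArg (fun t : ℤ => (t : DualNumber ℂ)) H20
    + (DualNumber.eps) * (algebraMap ℂ (DualNumber ℂ) Complex.I) * congrArg (fun t : ℤ => (t : DualNumber ℂ)) H21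
    + (DualNumber.eps) * (DualNumber.eps) * congrArg (fun t : ℤ => (t : DualNumber ℂ)) H22
    + (DualNumber.eps) * (algebraMap ℂ (DualNumber ℂ) Complex.I * DualNumber.eps) * congrArg (fun t : ℤ => (t : DualNumber ℂ)) H23
    + (algebraMap ℂ (DualNumber ℂ) Complex.I * DualNumber.eps) * (1 : DualNumber ℂ) * congrArg (fun t : ℤ => (t : DualNumber ℂ)) H30
    + (algebraMap ℂ (DualNumber ℂ) Complex.I * DualNumber.eps) * (algebraMap ℂ (DualNumber ℂ) Complex.I) * congrArg (fun t : ℤ => (t : DualNumber ℂ)) H31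
    + (algebraMap ℂ (DualNumber ℂ) Complex.I * DualNumber.eps) * (DualNumber.eps) * congrArg (fun t : ℤ => (t : DualNumber ℂ)) H32
    + (algebraMap ℂ (DualNumber ℂ) Complex.I * DualNumber.eps) * (algebraMap ℂ (DualNumber ℂ) Complex.I * DualNumber.eps) * congrArg (fun t : ℤ => (t : DualNumber ℂ)) H33

lemma DCP_stepB (r : ℕ) (hr : 1 ≤ r) :
    DCP r ^ 2 - DCP (r + r) * DCP 0 =
      2 * (pell r : DualNumber ℂ) ^ 2
        * (1 + algebraMap ℂ (DualNumber ℂ) Complex.I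
          + 6 * DualNumber.eps
          + 6 * (algebraMap ℂ (DualNumber ℂ) Complex.I * DualNumber.eps)) := by
  obtain ⟨s, rfl⟩ : ∃ s, r = s + 1 := ⟨r - 1, by omega⟩
  have h2 : pell (s + 2) = 2 * pell (s + 1) + pell s := pell_add_two s
  have h3 : pell (s + 3) = 2 * pell (s + 2) + pell (s + 1) := by
    have h := pell_add_two (s + 1)
    rwa [show s + 1 + 2 = s + 3 by omega, show s + 1 + 1 = s + 2 by omega] at h
  have h4 : pell (s + 4) = 2 * pell (s + 3) + pell (s + 2) := by
    have h := pell_add_two (s + 2)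
    rwa [show s + 2 + 2 = s + 4 by omega, show s + 2 + 1 = s + 3 by omega] at h
  have g2 : pell s * pell (s + 1) + pell (s + 1) * pell (s + 2) = pell (s + s + 2) := by
    have h := pell_mul_add s (s + 1)
    rwa [show s + 1 + 1 = s + 2 by omega, show s + (s + 1) + 1 = s + s + 2 by omega] at h
  have g3 : pell (s + 1) * pell (s + 1) + pell (s + 2) * pell (s + 2) = pell (s + s + 3) := by
    have h := pell_mul_add (s + 1) (s + 1)
    rwa [show s + 1 + 1 = s + 2 by omega, show s + 1 + (s + 1) + 1 = s + s + 3 by omega] at h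
  have g4 : pell (s + 1) * pell (s + 2) + pell (s + 2) * pell (s + 3) = pell (s + s + 4) := by
    have h := pell_mul_add (s + 1) (s + 2)
    rwa [show s + 1 + 1 = s + 2 by omega, show s + 2 + 1 = s + 3 by omega,
         show s + 1 + (s + 2) + 1 = s + s + 4 by omega] at h
  have g5 : pell (s + 2) * pell (s + 2) + pell (s + 3) * pell (s + 3) = pell (s + s + 5) := by
    have h := pell_mul_add (s + 2) (s + 2)
    rwa [show s + 2 + 1 = s + 3 by omega, show s + 2 + (s + 2) + 1 = s + s + 5 by omega] at h
  have H2 := congrArg (fun t : ℤ => (t : DualNumber ℂ)) h2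
  have H3 := congrArg (fun t : ℤ => (t : DualNumber ℂ)) h3
  have H4 := congrArg (fun t : ℤ => (t : DualNumber ℂ)) h4
  have G2 := congrArg (fun t : ℤ => (t : DualNumber ℂ)) g2
  have G3 := congrArg (fun t : ℤ => (t : DualNumber ℂ)) g3
  have G4 := congrArg (fun t : ℤ => (t : DualNumber ℂ)) g4
  have G5 := congrArg (fun t : ℤ => (t : DualNumber ℂ)) g5
  have hI : algebraMap ℂ (DualNumber ℂ) Complex.I * algebraMap ℂ (DualNumber ℂ) Complex.I = -1 := by
    rw [← map_mul, Complex.I_mul_I, map_neg, map_one]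
  have hE : (DualNumber.eps : DualNumber ℂ) * DualNumber.eps = 0 := DualNumber.eps_mul_eps
  simp only [DCP, Nat.zero_add]
  rw [show s + 1 + (s + 1) = s + s + 2 by omega]
  rw [show s + s + 2 + 1 = s + s + 3 by omega, show s + s + 2 + 2 = s + s + 4 by omega,
      show s + s + 2 + 3 = s + s + 5 by omega]
  rw [show s + 1 + 1 = s + 2 by omega, show s + 1 + 2 = s + 3 by omega,
      show s + 1 + 3 = s + 4 by omega]
  rw [show (pell 0 : ℤ) = 0 from rfl, show (pell 1 : ℤ) = 1 from rfl,
      show (pell 2 : ℤ) = 2 from rfl, show (pell 3 : ℤ) = 5 from rfl]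
  push_cast
  linear_combination (norm := (push_cast; ring1)) (2*(DualNumber.eps) + (algebraMap ℂ (DualNumber ℂ) Complex.I) + 5*(algebraMap ℂ (DualNumber ℂ) Complex.I)*(DualNumber.eps)) * G2
    + (2*(algebraMap ℂ (DualNumber ℂ) Complex.I)*(DualNumber.eps) + (algebraMap ℂ (DualNumber ℂ) Complex.I)^2 + 5*(algebraMap ℂ (DualNumber ℂ) Complex.I)^2*(DualNumber.eps)) * G3
    + (2*(DualNumber.eps)^2 + (algebraMap ℂ (DualNumber ℂ) Complex.I)*(DualNumber.eps) + 5*(algebraMap ℂ (DualNumber ℂ) Complex.I)*(DualNumber.eps)^2) * G4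
    + (2*(algebraMap ℂ (DualNumber ℂ) Complex.I)*(DualNumber.eps)^2 + (algebraMap ℂ (DualNumber ℂ) Complex.I)^2*(DualNumber.eps) + 5*(algebraMap ℂ (DualNumber ℂ) Complex.I)^2*(DualNumber.eps)^2) * G5
    + ((pell (s+4) : DualNumber ℂ)^2*(DualNumber.eps)^2 - (pell (s+3) : DualNumber ℂ)^2*(DualNumber.eps) - 5*(pell (s+3) : DualNumber ℂ)^2*(DualNumber.eps)^2 + 2*(pell (s+2) : DualNumber ℂ)*(pell (s+4) : DualNumber ℂ)*(DualNumber.eps) - 6*(pell (s+2) : DualNumber ℂ)^2*(DualNumber.eps) - 5*(pell (s+2) : DualNumber ℂ)^2*(DualNumber.eps)^2 - (pell (s+1) : DualNumber ℂ)^2 - 5*(pell (s+1) : DualNumber ℂ)^2*(DualNumber.eps)) * hI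
    + (-(pell (s+4) : DualNumber ℂ)^2 + 2*(pell (s+3) : DualNumber ℂ)*(pell (s+4) : DualNumber ℂ)*(algebraMap ℂ (DualNumber ℂ) Complex.I) + 6*(pell (s+3) : DualNumber ℂ)^2 - 2*(pell (s+3) : DualNumber ℂ)^2*(algebraMap ℂ (DualNumber ℂ) Complex.I) - 2*(pell (s+2) : DualNumber ℂ)*(pell (s+3) : DualNumber ℂ) - 5*(pell (s+2) : DualNumber ℂ)*(pell (s+3) : DualNumber ℂ)*(algebraMap ℂ (DualNumber ℂ) Complex.I) + 5*(pell (s+2) : DualNumber ℂ)^2 - 2*(pell (s+2) : DualNumber ℂ)^2*(algebraMap ℂ (DualNumber ℂ) Complex.I) - 2*(pell (s+1) : DualNumber ℂ)*(pell (s+2) : DualNumber ℂ) - 5*(pell (s+1) : DualNumber ℂ)*(pell (s+2) : DualNumber ℂ)*(algebraMap ℂ (DualNumber ℂ) Complex.I)) * hE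
    + (-2*(pell (s+2) : DualNumber ℂ)*(DualNumber.eps) + 2*(pell (s+1) : DualNumber ℂ)*(algebraMap ℂ (DualNumber ℂ) Complex.I)*(DualNumber.eps)) * H4
    + ((pell (s+3) : DualNumber ℂ)*(DualNumber.eps) - 2*(pell (s+2) : DualNumber ℂ)*(DualNumber.eps) + (pell (s+2) : DualNumber ℂ)*(algebraMap ℂ (DualNumber ℂ) Complex.I)*(DualNumber.eps) + 3*(pell (s+1) : DualNumber ℂ)*(DualNumber.eps) + 4*(pell (s+1) : DualNumber ℂ)*(algebraMap ℂ (DualNumber ℂ) Complex.I)*(DualNumber.eps)) * H3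
    + (2*(pell (s+1) : DualNumber ℂ)*(DualNumber.eps) + (pell (s+1) : DualNumber ℂ)*(algebraMap ℂ (DualNumber ℂ) Complex.I) + 5*(pell (s+1) : DualNumber ℂ)*(algebraMap ℂ (DualNumber ℂ) Complex.I)*(DualNumber.eps)) * H2

theorem DCP_catalan (n r : ℕ) (hr : 1 ≤ r) (hrn : r ≤ n) :
    (DCP n) ^ 2 - DCP (n + r) * DCP (n - r) =
      (-1) ^ (n - r) * 2 * (pell r : DualNumber ℂ) ^ 2
        * (1 + algebraMap ℂ (DualNumber ℂ) Complex.I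
          + 6 * DualNumber.eps
          + 6 * (algebraMap ℂ (DualNumber ℂ) Complex.I * DualNumber.eps)) := by
  obtain ⟨u, rfl⟩ : ∃ u, n = u + r := ⟨n - r, by omega⟩
  rw [show u + r - r = u by omega]
  rw [DCP_stepA u r, DCP_stepB r hr]
  ring
end
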